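/- For γ ∈ (0,1) and integers n, m ≥ 2, f(γ,n,m) > 1 if and only if n < m, where f(γ,n,m) = ((1-γⁿ)(1-γ^{m-1}))/((1-γᵐ)(1-γ^{n-1})). -/

import Mathlib

/-- f(γ,n,m) > 1 ↔ n < m. -/
theorem comparison_function_gt_one_iff (γ : ℝ) (hγ0 : 0 < γ) (hγ1 : γ < 1)
    (n m : ℕ) (hn : 2 ≤ n) (hm : 2 ≤ m) :
    1 < (1 - γ ^ n) * (1 - γ ^ (m - 1)) / ((1 - γ ^ m) * (1 - γ ^ (n - 1))) ↔ n < m := by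
  obtain ⟨a, rfl⟩ := Nat.exists_eq_add_of_le hn
  obtain ⟨b, rfl⟩ := Nat.exists_eq_add_of_le hm
  have hpos : ∀ k : ℕ, 1 ≤ k → (0:ℝ) < 1 - γ ^ k := fun k hk => by
    have := pow_lt_one₀ hγ0.le hγ1 (by omega : k ≠ 0)
    linarith
  have hden : (0:ℝ) < (1 - γ ^ (2 + b)) * (1 - γ ^ (2 + a - 1)) :=
    mul_pos (hpos _ (by omega)) (hpos _ (by omega))
  rw [one_lt_div hden]
  have h1 : 2 + a - 1 = a + 1 := by omega
  have h2 : 2 + b - 1 = b + 1 := by omega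
  rw [h1, h2]
  have key : (1 - γ ^ (2 + a)) * (1 - γ ^ (b + 1)) - (1 - γ ^ (2 + b)) * (1 - γ ^ (a + 1))
      = (1 - γ) * (γ ^ (a + 1) - γ ^ (b + 1)) := by ring
  constructor
  · intro h
    have hd : (0:ℝ) < (1 - γ) * (γ ^ (a + 1) - γ ^ (b + 1)) := by rw [← key]; linarith
    have := mul_pos_iff.mp hd
    rcases this with ⟨_, h2⟩ | ⟨h1, _⟩
    · have : γ ^ (b + 1) < γ ^ (a + 1) := by linarith
      have := (pow_lt_pow_iff_right_of_lt_one₀ hγ0 hγ1).mp this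
      omega
    · linarith
  · intro h
    have hlt : γ ^ (b + 1) < γ ^ (a + 1) :=
      (pow_lt_pow_iff_right_of_lt_one₀ hγ0 hγ1).mpr (by omega)
    nlinarith [key]
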